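/- arXiv:1406.7571 — 2 statements merged into one kernel-verified Lean document; each statement's English description precedes it below -/
import Mathlib

section
/- Let q be a positive integer, c a positive integer, and x_0, ..., x_{λ-1} positive integers with λ ≥ 1. Then [q+c, x_0, ..., x_{λ-1}, q]* = c·[x_0, ..., x_{λ-1}] − [x_0, ..., x_{λ-2}] + [x_1, ..., x_{λ-1}], and this quantity is positive. -/
/-- The continuant of a finite sequence of integers. -/
def cont : List ℤ → ℤ
  | [] => 1
  | [a] => a
  | a :: b :: l => a * cont (b :: l) + cont l


/-- The anticontinuant `[q₀,…,q_{s-1}]* = [q₀,…,q_{s-2}] − [q₁,…,q_{s-1}]`. -/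
def anticont (l : List ℤ) : ℤ := cont l.dropLast - cont l.tail

/-!
Expanding the continuant at its first entry, `[p, x] = p·[x] + [x₁,…]`, and at its last entry,
`[x, q] = q·[x] + […,x_{λ-2}]`, the anticontinuant `[p, x, q]*` equals
`(p - q)·[x] - [x₀,…,x_{λ-2}] + [x₁,…,x_{λ-1}]`. For positive entries, dropping the last entry
does not increase the continuant, which gives positivity when `p - q ≥ 1`.
-/

lemma cont_cons_cons (a b : ℤ) (l : List ℤ) :
    cont (a :: b :: l) = a * cont (b :: l) + cont l := rfl

lemma cont_pos : ∀ l : List ℤ, (∀ a ∈ l, 0 < a) → 0 < cont l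
  | [], _ => by simp [cont]
  | [a], h => by simpa [cont] using h a (by simp)
  | a :: b :: t, h => by
      have hbt := cont_pos (b :: t) fun x hx => h x (List.mem_cons_of_mem a hx)
      have ht := cont_pos t fun x hx => h x (by simp [hx])
      have ha := h a (by simp)
      rw [cont_cons_cons]
      nlinarith

lemma cont_cons {l : List ℤ} (a : ℤ) (hl : l ≠ []) :
    cont (a :: l) = a * cont l + cont l.tail := by
  obtain ⟨b, t, rfl⟩ := List.exists_cons_of_ne_nil hl
  rfl

lemma cont_append_singleton : ∀ {l : List ℤ} (a : ℤ), l ≠ [] →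
    cont (l ++ [a]) = a * cont l + cont l.dropLast
  | [b], a, _ => by simp [cont]; ring
  | [b, c], a, _ => by simp [cont]; ring
  | b :: c :: d :: t, a, _ => by
      have hcd := cont_append_singleton (l := c :: d :: t) a (by simp)
      have hd := cont_append_singleton (l := d :: t) a (by simp)
      have hdrop : (b :: c :: d :: t).dropLast = b :: c :: (d :: t).dropLast := by simp
      rw [show (c :: d :: t).dropLast = c :: (d :: t).dropLast by simp] at hcd
      rw [hdrop]
      simp only [List.cons_append] at hcd hd ⊢
      rw [cont_cons_cons b c (d :: (t ++ [a])), cont_cons_cons b c (d :: t).dropLast,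
        cont_cons_cons b c (d :: t)]
      linear_combination b * hcd + hd

lemma cont_dropLast_le {l : List ℤ} (hl : ∀ a ∈ l, 0 < a) : cont l.dropLast ≤ cont l := by
  rcases List.eq_nil_or_concat l with rfl | ⟨y, a, rfl⟩
  · rfl
  simp only [List.concat_eq_append, List.dropLast_concat] at hl ⊢
  have ha : 0 < a := hl a (by simp)
  rcases eq_or_ne y [] with rfl | hy
  · simpa [cont] using Int.add_one_le_iff.mpr ha
  have hy_pos : 0 < cont y := cont_pos y fun b hb => hl b (by simp [hb])
  have hy_drop_pos : 0 < cont y.dropLast :=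
    cont_pos _ fun b hb => hl b (by simp [(List.dropLast_sublist y).mem hb])
  rw [cont_append_singleton a hy]
  nlinarith

lemma anticont_cons_append_singleton (p q : ℤ) (x : List ℤ) :
    anticont (p :: (x ++ [q])) = (p - q) * cont x - cont x.dropLast + cont x.tail := by
  rcases eq_or_ne x [] with rfl | hx
  · simp [anticont, cont]
  have hdrop : (p :: (x ++ [q])).dropLast = p :: x := by
    rw [← List.cons_append, List.dropLast_concat]
  rw [anticont, hdrop, List.tail_cons, cont_cons p hx, cont_append_singleton q hx]
  ring

theorem anticont_expansion_general (q c : ℤ) (hc : 0 < c)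
    (x : List ℤ) (hxpos : ∀ a ∈ x, 0 < a) :
    anticont ((q + c) :: (x ++ [q])) = c * cont x - cont x.dropLast + cont x.tail ∧
      0 < anticont ((q + c) :: (x ++ [q])) := by
  have hexp := anticont_cons_append_singleton (q + c) q x
  rw [add_sub_cancel_left] at hexp
  refine ⟨hexp, ?_⟩
  have hx_pos : 0 < cont x := cont_pos x hxpos
  have htail_pos : 0 < cont x.tail := cont_pos _ fun a ha => hxpos a (List.mem_of_mem_tail ha)
  have hdrop_le : cont x.dropLast ≤ cont x := cont_dropLast_le hxpos
  rw [hexp]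
  nlinarith

/-- `[q+c, x₀,…,x_{λ-1}, q]* = c·[x₀,…,x_{λ-1}] − [x₀,…,x_{λ-2}] + [x₁,…,x_{λ-1}]`,
and this quantity is positive. -/
theorem anticont_expansion (q c : ℤ) (hq : 0 < q) (hc : 0 < c)
    (x : List ℤ) (hx : x ≠ []) (hxpos : ∀ a ∈ x, 0 < a) :
    anticont ((q + c) :: (x ++ [q])) = c * cont x - cont x.dropLast + cont x.tail ∧
      0 < anticont ((q + c) :: (x ++ [q])) :=
  anticont_expansion_general q c hc x hxpos
end

section
/- For any positive integers q, c, x with λ ≥ 2 being the length of the middle block, if c and x_{λ-1} are both larger than n, then [q+c, x_0, ..., x_{λ-1}, q]* > n for all choices of positive integers x_0, ..., x_{λ-2}. -/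
/-!
Expanding both continuants along the shared block `y ++ [x]` cancels the `q`-terms and leaves
`[q+c, y, x, q]* = c [y, x] + [(y ++ [x]).tail] - [y]`. Since `[y, x] ≥ x [y]` and all continuants of
positive entries are at least `1`, this is at least `(c x - 1) [y] + 1 ≥ c x ≥ x > n`.
-/

theorem cont_cons_of_ne_nil (a : ℤ) {l : List ℤ} (hl : l ≠ []) :
    cont (a :: l) = a * cont l + cont l.tail := by
  obtain ⟨b, t, rfl⟩ := List.exists_cons_of_ne_nil hl
  rfl

theorem cont_append_pair (a b : ℤ) : ∀ l : List ℤ,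
    cont (l ++ [a, b]) = b * cont (l ++ [a]) + cont l
  | [] => by simp only [cont, List.nil_append]; ring
  | [x] => by simp only [cont, List.cons_append, List.nil_append]; ring
  | x :: z :: t => by
    have hzt := cont_append_pair a b (z :: t)
    have ht := cont_append_pair a b t
    simp only [List.cons_append] at hzt ⊢
    simp only [cont, hzt, ht]
    ring

theorem one_le_cont : ∀ l : List ℤ, (∀ a ∈ l, 0 < a) → 1 ≤ cont l
  | [], _ => le_rfl
  | [a], h => h a (by simp)
  | a :: b :: t, h => by
    have ha : 0 < a := h a (by simp)
    have hbt := one_le_cont (b :: t) fun x hx => h x (List.mem_cons_of_mem a hx)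
    have ht := one_le_cont t fun x hx => h x (by simp [hx])
    show 1 ≤ a * cont (b :: t) + cont t
    nlinarith

theorem mul_cont_le_cont_concat (x : ℤ) {l : List ℤ} (hl : ∀ a ∈ l, 0 < a) :
    x * cont l ≤ cont (l ++ [x]) := by
  rcases List.eq_nil_or_concat' l with rfl | ⟨l', b, rfl⟩
  · simp [cont]
  · have hl' : 1 ≤ cont l' := one_le_cont l' fun a ha => hl a (List.mem_append_left _ ha)
    rw [List.append_assoc, List.singleton_append, cont_append_pair]
    linarith

theorem anticont_add_cons_append_pair (q c x : ℤ) (y : List ℤ) :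
    anticont ((q + c) :: (y ++ [x, q])) = c * cont (y ++ [x]) + cont (y ++ [x]).tail - cont y := by
  have hdrop : (y ++ [x, q]).dropLast = y ++ [x] := by
    rw [← List.singleton_append, ← List.append_assoc, List.dropLast_concat]
  rw [anticont, List.dropLast_cons_of_ne_nil (by simp), hdrop, List.tail_cons,
    cont_cons_of_ne_nil _ (by simp), cont_append_pair]
  ring

theorem anticont_gt_general (n q c xlast : ℤ) (hn : 0 < n) (hc : 0 < c)
    (hnx : n < xlast)
    (y : List ℤ) (hypos : ∀ a ∈ y, 0 < a) :
    n < anticont ((q + c) :: ((y ++ [xlast]) ++ [q])) := by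
  have hpos : ∀ a ∈ y ++ [xlast], 0 < a := by
    rintro a ha
    rcases List.mem_append.1 ha with ha | ha
    · exact hypos a ha
    · exact (List.eq_of_mem_singleton ha) ▸ hn.trans hnx
  have hy : 1 ≤ cont y := one_le_cont y hypos
  have htail : 1 ≤ cont (y ++ [xlast]).tail :=
    one_le_cont _ fun a ha => hpos a (List.mem_of_mem_tail ha)
  have hlast : xlast * cont y ≤ cont (y ++ [xlast]) := mul_cont_le_cont_concat xlast hypos
  rw [List.append_assoc, List.singleton_append, anticont_add_cons_append_pair]
  nlinarith [mul_le_mul_of_nonneg_left hlast hc.le,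
    mul_le_mul_of_nonneg_left hy (by nlinarith : (0 : ℤ) ≤ c * xlast - 1)]

/-- If `c` and the last middle entry `x_{λ-1}` are both larger than `n` (with `λ ≥ 2`),
then `[q+c, x₀,…,x_{λ-1}, q]* > n` for all positive integers `x₀,…,x_{λ-2}`. -/
theorem anticont_gt (n q c xlast : ℤ) (hn : 0 < n) (hq : 0 < q) (hc : 0 < c)
    (hnc : n < c) (hnx : n < xlast)
    (y : List ℤ) (hy : y ≠ []) (hypos : ∀ a ∈ y, 0 < a) :
    n < anticont ((q + c) :: ((y ++ [xlast]) ++ [q])) :=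
  anticont_gt_general n q c xlast hn hc hnx y hypos
end
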